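/- Characterization of absolute integrability: let K be a compact line and G : K → ℝ a nondecreasing amenable function. If f is G-integrable and F(x) = ∫_{0_K}^x f dG, then |f| is G-integrable if and only if F ∈ NBV(K) (F is amenable of bounded variation); in that case ∫_K |f| dG = |f(0_K)| G(0_K) + Var(F, K). -/

import Mathlib

/-! By the Saks–Henstock lemma, on a fine partition the Stieltjes terms `f(tᵢ)(G(xᵢ) - G(xᵢ₋₁))`
are close to the increments of the primitive `F` even in total absolute deviation. As `G` is
nondecreasing, the Riemann sums of `|f|` are then close to the variation sums of `F` over the same
partition. So an integral of `|f|` bounds every variation sum of `F` (refine the division to a fine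
partition), and conversely, once a gauge forces the points of a nearly maximal division to be
tags, the Riemann sums of `|f|` are squeezed between `|f(0)| G(0) + Var F` up to `ε`. Amenability
of `F` comes from the local form of Saks–Henstock, `F(y) - F(x) - f(x)(G(y) - G(x)) → 0` as
`y → x`. -/

open Set Filter MeasureTheory

/-- A tagged partition of the interval `[a,b]` in a linear order `K`. -/
structure TaggedPartition (K : Type*) [LinearOrder K] (a b : K) where
  n : ℕ
  x : ℕ → K
  t : ℕ → K
  x_zero : x 0 = a
  x_last : x n = b
  mono : ∀ i < n, x i ≤ x (i + 1)
  tag_mem : ∀ i < n, t (i + 1) ∈ Set.Icc (x i) (x (i + 1))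

/-- A gauge on the interval `[a,b]` of `K`: each point of `[a,b]` is assigned a
relatively open subinterval of `[a,b]` containing it. -/
def IsGauge (K : Type*) [LinearOrder K] [TopologicalSpace K] (a b : K) (δ : K → Set K) : Prop :=
  ∀ x ∈ Set.Icc a b, x ∈ δ x ∧ (δ x).OrdConnected ∧ ∃ U, IsOpen U ∧ δ x = U ∩ Set.Icc a b

/-- A tagged partition is `δ`-fine when `(x_{i-1}, x_i] ⊆ δ(t_i)` for all `i`. -/
def TaggedPartition.IsFine {K : Type*} [LinearOrder K] {a b : K}
    (P : TaggedPartition K a b) (δ : K → Set K) : Prop :=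
  ∀ i < P.n, Set.Ioc (P.x i) (P.x (i + 1)) ⊆ δ (P.t (i + 1))

/-- The Riemann sum `S(f,G,P) = f(a)G(a) + Σ f(t_i)(G(x_i) - G(x_{i-1}))`. -/
noncomputable def riemannSum {K : Type*} [LinearOrder K] {a b : K}
    (f G : K → ℝ) (P : TaggedPartition K a b) : ℝ :=
  f a * G a + ∑ i ∈ Finset.range P.n, f (P.t (i + 1)) * (G (P.x (i + 1)) - G (P.x i))

/-- `f` has Kurzweil–Stieltjes integral `A` with respect to `G` over `[a,b]`. -/
def HasIntegral {K : Type*} [LinearOrder K] [TopologicalSpace K]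
    (f G : K → ℝ) (a b : K) (A : ℝ) : Prop :=
  ∀ ε : ℝ, 0 < ε → ∃ δ : K → Set K, IsGauge K a b δ ∧
    ∀ P : TaggedPartition K a b, P.IsFine δ → |riemannSum f G P - A| < ε

/-- `G` is amenable: right-continuous everywhere, and regulated (left limits exist at
left-dense points, right limits at right-dense points). -/
def Amenable {K : Type*} [LinearOrder K] [TopologicalSpace K] [BoundedOrder K]
    (G : K → ℝ) : Prop :=
  (∀ x : K, ContinuousWithinAt G (Set.Ici x) x) ∧
  (∀ x : K, x ≠ ⊥ → (¬ ∃ y, y ⋖ x) → ∃ l, Filter.Tendsto G (nhdsWithin x (Set.Iio x)) (nhds l)) ∧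
  (∀ x : K, x ≠ ⊤ → (¬ ∃ y, x ⋖ y) → ∃ l, Filter.Tendsto G (nhdsWithin x (Set.Ioi x)) (nhds l))

open Classical in
/-- `L_G(x)`: `0` at the least element, `G` of the immediate predecessor if `x` is
left-isolated, and the left limit of `G` at `x` if `x` is left-dense. -/
noncomputable def Lfun {K : Type*} [LinearOrder K] [TopologicalSpace K] [BoundedOrder K]
    (G : K → ℝ) (x : K) : ℝ :=
  if x = ⊥ then 0
  else if h : ∃ y, y ⋖ x then G h.choose
  else Function.leftLim G x

/-- The set of variation sums of `G` over divisions of `[a,b]`. -/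
def varSums {K : Type*} [LinearOrder K] (G : K → ℝ) (a b : K) : Set ℝ :=
  {v | ∃ (n : ℕ) (x : ℕ → K), x 0 = a ∧ x n = b ∧ (∀ i < n, x i ≤ x (i + 1)) ∧
        v = ∑ i ∈ Finset.range n, |G (x (i + 1)) - G (x i)|}

/-- `S` is null for the outer measure induced by `μ` via covers by countably many
open intervals. -/
def GNull {K : Type*} [LinearOrder K] [TopologicalSpace K] [MeasurableSpace K]
    (μ : MeasureTheory.Measure K) (S : Set K) : Prop :=
  ∀ ε : ℝ, 0 < ε → ∃ I : ℕ → Set K, (∀ n, IsOpen (I n) ∧ (I n).OrdConnected) ∧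
    S ⊆ ⋃ n, I n ∧ ∑' n, μ (I n) < ENNReal.ofReal ε

section Sequences

variable {α : Type*}

def seqAppend (n : ℕ) (x y : ℕ → α) (i : ℕ) : α := if i ≤ n then x i else y (i - n)

theorem seqAppend_of_le {n i : ℕ} {x y : ℕ → α} (h : i ≤ n) : seqAppend n x y i = x i := if_pos h

theorem seqAppend_add_succ (n j : ℕ) (x y : ℕ → α) : seqAppend n x y (n + (j + 1)) = y (j + 1) := by
  simp [seqAppend]

theorem seqAppend_add {n : ℕ} {x y : ℕ → α} (h : x n = y 0) (j : ℕ) :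
    seqAppend n x y (n + j) = y j := by
  cases j with
  | zero => simpa [seqAppend_of_le] using h
  | succ j => exact seqAppend_add_succ n j x y

theorem forall_lt_add_iff {p : ℕ → Prop} {n m : ℕ} :
    (∀ i < n + m, p i) ↔ (∀ i < n, p i) ∧ ∀ j < m, p (n + j) := by
  refine ⟨fun h => ⟨fun i hi => h i (by omega), fun j hj => h _ (by omega)⟩, fun h i hi => ?_⟩
  rcases lt_or_ge i n with hin | hin
  · exact h.1 i hin
  · obtain ⟨j, rfl⟩ := Nat.exists_eq_add_of_le hin
    exact h.2 j (by omega)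

def seqInterleave (x y : ℕ → α) (i : ℕ) : α := if Even i then x (i / 2) else y (i / 2 + 1)

variable (x y : ℕ → α) (k : ℕ)

@[simp] theorem seqInterleave_zero : seqInterleave x y 0 = x 0 := by
  simp [seqInterleave]

@[simp] theorem seqInterleave_two_mul : seqInterleave x y (2 * k) = x k := by
  simp [seqInterleave]

@[simp] theorem seqInterleave_two_mul_add_one : seqInterleave x y (2 * k + 1) = y (k + 1) := by
  simp [seqInterleave, Nat.mul_add_div]

@[simp] theorem seqInterleave_two_mul_add_two : seqInterleave x y (2 * k + 1 + 1) = x (k + 1) :=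
  seqInterleave_two_mul x y (k + 1)

theorem forall_lt_two_mul_iff {p : ℕ → Prop} {n : ℕ} :
    (∀ i < 2 * n, p i) ↔ ∀ k < n, p (2 * k) ∧ p (2 * k + 1) := by
  refine ⟨fun h k hk => ⟨h _ (by omega), h _ (by omega)⟩, fun h i hi => ?_⟩
  obtain ⟨k, rfl | rfl⟩ := Nat.even_or_odd' i
  exacts [(h k (by omega)).1, (h k (by omega)).2]

theorem sum_range_two_mul {M : Type*} [AddCommMonoid M] (g : ℕ → M) (n : ℕ) :
    ∑ i ∈ Finset.range (2 * n), g i = ∑ k ∈ Finset.range n, (g (2 * k) + g (2 * k + 1)) := by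
  induction n with
  | zero => simp
  | succ n ih => rw [Nat.mul_succ, Finset.sum_range_succ, Finset.sum_range_succ,
      Finset.sum_range_succ, ih, add_assoc]

end Sequences

def stieltjesTerm {K : Type*} (f G : K → ℝ) (t u v : K) : ℝ := f t * (G v - G u)

def stieltjesDefect {K : Type*} (f G F : K → ℝ) (t u v : K) : ℝ :=
  stieltjesTerm f G t u v - (F v - F u)

namespace TaggedPartition

variable {K : Type*} [LinearOrder K] {a b c : K}

noncomputable def intervalSum (P : TaggedPartition K a b) (φ : K → K → K → ℝ) : ℝ :=
  ∑ i ∈ Finset.range P.n, φ (P.t (i + 1)) (P.x i) (P.x (i + 1))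

theorem riemannSum_eq (f G : K → ℝ) (P : TaggedPartition K a b) :
    riemannSum f G P = f a * G a + P.intervalSum (stieltjesTerm f G) := rfl

section intervalSum

variable (P : TaggedPartition K a b) {φ ψ : K → K → K → ℝ}

theorem intervalSum_sub :
    P.intervalSum (fun t u v => φ t u v - ψ t u v) = P.intervalSum φ - P.intervalSum ψ :=
  Finset.sum_sub_distrib ..

theorem abs_intervalSum_le : |P.intervalSum φ| ≤ P.intervalSum (fun t u v => |φ t u v|) :=
  Finset.abs_sum_le_sum_abs ..

theorem intervalSum_le_intervalSum (h : ∀ t u v, u ≤ v → φ t u v ≤ ψ t u v) :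
    P.intervalSum φ ≤ P.intervalSum ψ :=
  Finset.sum_le_sum fun i hi => h _ _ _ (P.mono i (Finset.mem_range.1 hi))

theorem intervalSum_nonneg (h : ∀ t u v, 0 ≤ φ t u v) : 0 ≤ P.intervalSum φ :=
  Finset.sum_nonneg fun _ _ => h ..

theorem intervalSum_sub_eq (g : K → ℝ) : P.intervalSum (fun _ u v => g v - g u) = g b - g a := by
  rw [intervalSum, Finset.sum_range_sub (fun i => g (P.x i)), P.x_last, P.x_zero]

theorem abs_sub_le_intervalSum (g : K → ℝ) :
    |g b - g a| ≤ P.intervalSum (fun _ u v => |g v - g u|) :=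
  P.intervalSum_sub_eq g ▸ P.abs_intervalSum_le

theorem intervalSum_mem_varSums (F : K → ℝ) :
    P.intervalSum (fun _ u v => |F v - F u|) ∈ varSums F a b :=
  ⟨P.n, P.x, P.x_zero, P.x_last, P.mono, rfl⟩

theorem abs_intervalSum_abs_sub_le {G : K → ℝ} (hG : Monotone G) (f F : K → ℝ) :
    |P.intervalSum (stieltjesTerm (fun x => |f x|) G) - P.intervalSum (fun _ u v => |F v - F u|)|
      ≤ P.intervalSum (fun t u v => |stieltjesDefect f G F t u v|) := by
  rw [← intervalSum_sub]
  refine P.abs_intervalSum_le.trans (P.intervalSum_le_intervalSum fun t u v huv => ?_)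
  have : stieltjesTerm (fun x => |f x|) G t u v = |stieltjesTerm f G t u v| := by
    rw [stieltjesTerm, stieltjesTerm, abs_mul, abs_of_nonneg (sub_nonneg.2 (hG huv))]
  rw [this, stieltjesDefect]
  exact abs_abs_sub_abs_le_abs_sub _ _

end intervalSum

theorem monotoneOn_x (P : TaggedPartition K a b) : MonotoneOn P.x (Set.Iic P.n) :=
  monotoneOn_of_le_succ Set.ordConnected_Iic fun i _ _ hi => P.mono i (Nat.lt_of_succ_le hi)

theorem exists_mem_Ioc (P : TaggedPartition K a b) {c : K} (hac : a < c) (hcb : c ≤ b) :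
    ∃ i < P.n, c ∈ Set.Ioc (P.x i) (P.x (i + 1)) := by
  classical
  have hcn : c ≤ P.x P.n := by rwa [P.x_last]
  have hex : ∃ k, c ≤ P.x k := ⟨P.n, hcn⟩
  obtain ⟨i, hi⟩ : ∃ i, Nat.find hex = i + 1 := Nat.exists_eq_succ_of_ne_zero fun h =>
    (Nat.find_spec hex).not_gt (by rwa [h, P.x_zero])
  have hfind := Nat.find_spec hex
  rw [hi] at hfind
  refine ⟨i, ?_, not_le.1 (Nat.find_min hex (by omega)), hfind⟩
  have := Nat.find_min' hex hcn
  omega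

def point (a : K) : TaggedPartition K a a where
  n := 0
  x _ := a
  t _ := a
  x_zero := rfl
  x_last := rfl
  mono _ h := absurd h (Nat.not_lt_zero _)
  tag_mem _ h := absurd h (Nat.not_lt_zero _)

@[simp] theorem intervalSum_point (φ : K → K → K → ℝ) : (point a).intervalSum φ = 0 := rfl

@[simp] theorem riemannSum_point (f G : K → ℝ) : riemannSum f G (point a) = f a * G a := by
  simp [riemannSum_eq]

theorem isFine_point (δ : K → Set K) : (point a).IsFine δ := fun _ h => absurd h (Nat.not_lt_zero _)

def single (hab : a ≤ b) (τ : K) (hτ : τ ∈ Set.Icc a b) : TaggedPartition K a b where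
  n := 1
  x i := if i = 0 then a else b
  t _ := τ
  x_zero := rfl
  x_last := rfl
  mono i h := by
    obtain rfl : i = 0 := by omega
    simpa using hab
  tag_mem i h := by
    obtain rfl : i = 0 := by omega
    simpa using hτ

variable {hab : a ≤ b} {τ : K} {hτ : τ ∈ Set.Icc a b}

@[simp] theorem intervalSum_single (φ : K → K → K → ℝ) :
    (single hab τ hτ).intervalSum φ = φ τ a b := by
  simp [intervalSum, single]

theorem isFine_single {δ : K → Set K} (h : Set.Ioc a b ⊆ δ τ) : (single hab τ hτ).IsFine δ := by
  intro i hi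
  obtain rfl : i = 0 := by simpa [single] using hi
  simpa [single] using h

theorem IsFine.mono {P : TaggedPartition K a b} {δ δ' : K → Set K} (hP : P.IsFine δ)
    (h : ∀ x, δ x ⊆ δ' x) : P.IsFine δ' :=
  fun i hi => (hP i hi).trans (h _)

def trans (P : TaggedPartition K a b) (Q : TaggedPartition K b c) : TaggedPartition K a c where
  n := P.n + Q.n
  x := seqAppend P.n P.x Q.x
  t := seqAppend P.n P.t Q.t
  x_zero := by rw [seqAppend_of_le (Nat.zero_le _), P.x_zero]
  x_last := by rw [seqAppend_add (P.x_last.trans Q.x_zero.symm), Q.x_last]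
  mono := forall_lt_add_iff.2 ⟨fun i hi => by
      simpa only [seqAppend_of_le hi.le, seqAppend_of_le hi] using P.mono i hi, fun j hj => by
      simpa only [Nat.add_assoc, seqAppend_add (P.x_last.trans Q.x_zero.symm)] using Q.mono j hj⟩
  tag_mem := forall_lt_add_iff.2 ⟨fun i hi => by
      simpa only [seqAppend_of_le hi.le, seqAppend_of_le hi] using P.tag_mem i hi, fun j hj => by
      simpa only [Nat.add_assoc, seqAppend_add (P.x_last.trans Q.x_zero.symm),
        seqAppend_add_succ] using Q.tag_mem j hj⟩

section trans

variable (P : TaggedPartition K a b) (Q : TaggedPartition K b c)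

theorem intervalSum_trans (φ : K → K → K → ℝ) :
    (P.trans Q).intervalSum φ = P.intervalSum φ + Q.intervalSum φ := by
  have hPQ : P.x P.n = Q.x 0 := P.x_last.trans Q.x_zero.symm
  refine (Finset.sum_range_add ..).trans (congrArg₂ _ (Finset.sum_congr rfl fun i hi => ?_)
    (Finset.sum_congr rfl fun j _ => ?_))
  · have hi : i < P.n := Finset.mem_range.1 hi
    simp only [trans, seqAppend_of_le hi, seqAppend_of_le hi.le]
  · simp only [trans, Nat.add_assoc, seqAppend_add hPQ, seqAppend_add_succ]

theorem riemannSum_trans (f G : K → ℝ) :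
    riemannSum f G (P.trans Q) = riemannSum f G P + Q.intervalSum (stieltjesTerm f G) := by
  rw [riemannSum_eq, riemannSum_eq, intervalSum_trans, add_assoc]

variable {P Q} {δ : K → Set K}

theorem IsFine.trans (hP : P.IsFine δ) (hQ : Q.IsFine δ) : (P.trans Q).IsFine δ := by
  have hPQ : P.x P.n = Q.x 0 := P.x_last.trans Q.x_zero.symm
  refine forall_lt_add_iff.2 ⟨fun i hi => ?_, fun j hj => ?_⟩
  · simpa only [TaggedPartition.trans, seqAppend_of_le hi, seqAppend_of_le hi.le] using hP i hi
  · simpa only [TaggedPartition.trans, Nat.add_assoc, seqAppend_add hPQ, seqAppend_add_succ]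
      using hQ j hj

end trans

/-- Cut every interval of `P` at its tag, which becomes the tag of both halves. -/
def split (P : TaggedPartition K a b) : TaggedPartition K a b where
  n := 2 * P.n
  x := seqInterleave P.x P.t
  t := seqInterleave P.t P.t
  x_zero := by simpa using P.x_zero
  x_last := by simpa using P.x_last
  mono := forall_lt_two_mul_iff.2 fun k hk => by simpa using P.tag_mem k hk
  tag_mem := forall_lt_two_mul_iff.2 fun k hk => by simpa using P.tag_mem k hk

section split

variable (P : TaggedPartition K a b)

theorem intervalSum_split (φ : K → K → K → ℝ) :
    P.split.intervalSum φ = P.intervalSum (fun t u v => φ t u t + φ t t v) := by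
  simp [intervalSum, split, sum_range_two_mul]

theorem intervalSum_split_stieltjesTerm (f G : K → ℝ) :
    P.split.intervalSum (stieltjesTerm f G) = P.intervalSum (stieltjesTerm f G) := by
  rw [intervalSum_split]
  congr
  ext t u v
  simp only [stieltjesTerm]
  ring

theorem split_x_two_mul_add_one (i : ℕ) : P.split.x (2 * i + 1) = P.t (i + 1) :=
  seqInterleave_two_mul_add_one ..

variable {P} {δ : K → Set K}

theorem IsFine.split (hP : P.IsFine δ) : P.split.IsFine δ := by
  refine forall_lt_two_mul_iff.2 fun k hk => ⟨fun z hz => ?_, fun z hz => ?_⟩ <;>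
    simp only [TaggedPartition.split, seqInterleave_two_mul, seqInterleave_two_mul_add_one,
      seqInterleave_two_mul_add_two, Set.mem_Ioc] at hz ⊢ <;> refine hP k hk ?_
  · exact ⟨hz.1, hz.2.trans (P.tag_mem k hk).2⟩
  · exact ⟨(P.tag_mem k hk).1.trans_lt hz.1, hz.2⟩

theorem IsFine.exists_split_x_eq (hP : P.IsFine δ) {d : K} (hd : d ∈ Set.Icc a b)
    (htag : ∀ i < P.n, d ∈ δ (P.t (i + 1)) → d = P.t (i + 1)) :
    ∃ k ≤ P.split.n, P.split.x k = d := by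
  rcases hd.1.eq_or_lt with rfl | had
  · exact ⟨0, Nat.zero_le _, P.split.x_zero⟩
  obtain ⟨i, hi, hdi⟩ := P.exists_mem_Ioc had hd.2
  refine ⟨2 * i + 1, show 2 * i + 1 ≤ 2 * P.n by omega, ?_⟩
  rw [split_x_two_mul_add_one, htag i hi (hP i hi hdi)]

end split

theorem exists_isFine_of_pieces {δ : K → Set K} {φ : K → K → K → ℝ} {p : ℕ → ℝ → Prop}
    {n : ℕ} {x : ℕ → K} (hx0 : x 0 = a) (hxn : x n = b)
    (h : ∀ i < n, ∃ Q : TaggedPartition K (x i) (x (i + 1)), Q.IsFine δ ∧ p i (Q.intervalSum φ)) :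
    ∃ R : TaggedPartition K a b, R.IsFine δ ∧
      ∃ c : ℕ → ℝ, (∀ i < n, p i (c i)) ∧ R.intervalSum φ = ∑ i ∈ Finset.range n, c i := by
  subst hx0 hxn
  induction n with
  | zero => exact ⟨point _, isFine_point δ, 0, fun _ h => absurd h (Nat.not_lt_zero _), rfl⟩
  | succ n ih =>
    obtain ⟨R, hR, c, hc, hRc⟩ := ih fun i hi => h i (by omega)
    obtain ⟨Q, hQ, hpQ⟩ := h n n.lt_succ_self
    refine ⟨R.trans Q, hR.trans hQ, Function.update c n (Q.intervalSum φ), fun i hi => ?_, ?_⟩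
    · rcases Nat.lt_succ_iff_lt_or_eq.1 hi with hi | rfl
      · simpa [Function.update_of_ne hi.ne] using hc i hi
      · simpa using hpQ
    · rw [intervalSum_trans, Finset.sum_range_succ, Function.update_self, hRc]
      congr 1
      exact Finset.sum_congr rfl fun i hi =>
        (Function.update_of_ne (Finset.mem_range.1 hi).ne ..).symm

end TaggedPartition

section Gauge

variable {K : Type*} [LinearOrder K] [TopologicalSpace K] {a b : K} {δ δ' : K → Set K}

theorem IsGauge.inter (h : IsGauge K a b δ) (h' : IsGauge K a b δ') :
    IsGauge K a b (fun x => δ x ∩ δ' x) := by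
  intro x hx
  obtain ⟨hxδ, hc, U, hU, hδU⟩ := h x hx
  obtain ⟨hxδ', hc', U', hU', hδU'⟩ := h' x hx
  refine ⟨⟨hxδ, hxδ'⟩, hc.inter hc', U ∩ U', hU.inter hU', ?_⟩
  beta_reduce
  rw [hδU, hδU', ← Set.inter_inter_distrib_right]

theorem IsGauge.restrict (h : IsGauge K a b δ) {c d : K} (hcd : Set.Icc c d ⊆ Set.Icc a b) :
    IsGauge K c d (fun x => δ x ∩ Set.Icc c d) := by
  intro x hx
  obtain ⟨hxδ, hconn, U, hU, hδU⟩ := h x (hcd hx)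
  refine ⟨⟨hxδ, hx⟩, hconn.inter Set.ordConnected_Icc, U, hU, ?_⟩
  beta_reduce
  rw [hδU, Set.inter_assoc, Set.inter_eq_right.2 hcd]

theorem isGauge_inter_Icc {U : K → Set K}
    (hU : ∀ x ∈ Set.Icc a b, x ∈ U x ∧ IsOpen (U x) ∧ (U x).OrdConnected) :
    IsGauge K a b (fun x => U x ∩ Set.Icc a b) := fun x hx =>
  ⟨⟨(hU x hx).1, hx⟩, (hU x hx).2.2.inter Set.ordConnected_Icc, U x, (hU x hx).2.1, rfl⟩

theorem IsGauge.exists_eq_of_mem_finset [OrderTopology K] (h : IsGauge K a b δ) (D : Finset K) :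
    ∃ δ', IsGauge K a b δ' ∧ (∀ x, δ' x ⊆ δ x) ∧ ∀ x, ∀ d ∈ D, d ∈ δ' x → d = x := by
  classical
  set U : K → Set K := fun x =>
    (⋂ d ∈ D.filter (· < x), Set.Ioi d) ∩ ⋂ d ∈ D.filter (x < ·), Set.Iio d
  have hU : ∀ x, x ∈ U x ∧ IsOpen (U x) ∧ (U x).OrdConnected := fun x => by
    refine ⟨by simp [U], (isOpen_biInter_finset fun _ _ => isOpen_Ioi).inter
      (isOpen_biInter_finset fun _ _ => isOpen_Iio), ?_⟩
    exact (Set.ordConnected_biInter fun _ _ => Set.ordConnected_Ioi).inter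
      (Set.ordConnected_biInter fun _ _ => Set.ordConnected_Iio)
  refine ⟨_, h.inter (isGauge_inter_Icc fun x _ => hU x), fun x => Set.inter_subset_left,
    fun x d hd hdx => ?_⟩
  simp only [U, Set.mem_inter_iff, Set.mem_iInter, Finset.mem_filter] at hdx
  by_contra hne
  rcases lt_or_gt_of_ne hne with hlt | hlt
  · exact lt_irrefl d (hdx.2.1.1 d ⟨hd, hlt⟩)
  · exact lt_irrefl d (hdx.2.1.2 d ⟨hd, hlt⟩)

variable [BoundedOrder K]

theorem IsGauge.mem_nhds (h : IsGauge K ⊥ ⊤ δ) (x : K) : δ x ∈ nhds x := by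
  obtain ⟨hx, -, U, hU, hδU⟩ := h x ⟨bot_le, le_top⟩
  rw [hδU, Set.Icc_bot_top, Set.inter_univ] at hx ⊢
  exact hU.mem_nhds hx

end Gauge

namespace TaggedPartition

variable {K : Type*} [LinearOrder K] [TopologicalSpace K] [OrderTopology K] [CompactSpace K]

/-- Cousin's lemma. -/
theorem exists_isFine {a b : K} (hab : a ≤ b) {δ : K → Set K} (hδ : IsGauge K a b δ) :
    ∃ P : TaggedPartition K a b, P.IsFine δ := by
  set S := {c ∈ Set.Icc a b | ∃ P : TaggedPartition K a c, P.IsFine δ}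
  have extend : ∀ {u v τ : K}, u ∈ S → v ≤ b → (huv : u ≤ v) → (hτ : τ ∈ Set.Icc u v) →
      Set.Ioc u v ⊆ δ τ → v ∈ S := by
    rintro u v τ ⟨hu, P, hP⟩ hvb huv hτ hδτ
    exact ⟨⟨hu.1.trans huv, hvb⟩, P.trans (single huv τ hτ), hP.trans (isFine_single hδτ)⟩
  have haS : a ∈ S := ⟨⟨le_rfl, hab⟩, point a, isFine_point δ⟩
  obtain ⟨c, -, hc⟩ := isClosed_closure.isCompact.exists_isLUB ⟨a, subset_closure haS⟩
  rw [← isLUB_iff_of_subset_of_subset_closure subset_closure subset_rfl] at hc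
  have hcab : c ∈ Set.Icc a b := ⟨hc.1 haS, hc.2 fun _ hx => hx.1.2⟩
  obtain ⟨hcδ, hconn, U, hU, hδU⟩ := hδ c hcab
  have hcU : c ∈ U := (hδU ▸ hcδ).1
  have hcS : c ∈ S := by
    obtain ⟨e, heU, heS⟩ := mem_closure_iff.1 (hc.mem_closure ⟨a, haS⟩) U hU hcU
    have heδ : e ∈ δ c := hδU ▸ ⟨heU, heS.1⟩
    exact extend heS hcab.2 (hc.1 heS) ⟨hc.1 heS, le_rfl⟩
      fun z hz => hconn.out heδ hcδ ⟨hz.1.le, hz.2⟩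
  suffices hcb : c = b from hcb ▸ hcS.2
  by_contra hne
  have hcb : c < b := lt_of_le_of_ne hcab.2 hne
  have : ∃ d ∈ S, c < d := by
    by_cases hsucc : ∃ d, c ⋖ d
    · obtain ⟨d, hd⟩ := hsucc
      have hdb : d ≤ b := not_lt.1 fun hbd => (hd.le_of_lt hbd).not_gt hcb
      refine ⟨d, extend hcS hdb hd.le ⟨hd.le, le_rfl⟩ fun z hz => ?_, hd.lt⟩
      rw [(hd.eq_or_eq hz.1.le hz.2).resolve_left hz.1.ne']
      exact (hδ d ⟨hcab.1.trans hd.le, hdb⟩).1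
    · obtain ⟨u, hcu, hcuU⟩ := exists_Ico_subset_of_mem_nhds (hU.mem_nhds hcU) ⟨b, hcb⟩
      obtain ⟨m, hcm, hmu⟩ := (not_covBy_iff hcu).1 fun h => hsucc ⟨u, h⟩
      have hcd : c < min m b := lt_min hcm hcb
      refine ⟨min m b, extend hcS (min_le_right _ _) hcd.le ⟨le_rfl, hcd.le⟩ fun z hz => ?_, hcd⟩
      rw [hδU]
      exact ⟨hcuU ⟨hz.1.le, hz.2.trans_lt ((min_le_left _ _).trans_lt hmu)⟩,
        hcab.1.trans hz.1.le, hz.2.trans (min_le_right _ _)⟩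
  obtain ⟨d, hdS, hcd⟩ := this
  exact (hc.1 hdS).not_gt hcd

theorem le_of_forall_isFine_intervalSum_le {a b : K} {δ : K → Set K} (hδ : IsGauge K a b δ)
    {φ : K → K → K → ℝ} (hφ : ∀ t u v, 0 ≤ φ t u v) {C : ℝ}
    (h : ∀ P : TaggedPartition K a b, P.IsFine δ → P.intervalSum φ ≤ C) {u v τ : K}
    (hau : a ≤ u) (huv : u ≤ v) (hvb : v ≤ b) (hτ : τ ∈ Set.Icc u v)
    (hτδ : Set.Ioc u v ⊆ δ τ) : φ τ u v ≤ C := by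
  obtain ⟨P₀, hP₀⟩ := exists_isFine hau (hδ.restrict (Set.Icc_subset_Icc le_rfl (huv.trans hvb)))
  obtain ⟨P₁, hP₁⟩ := exists_isFine hvb (hδ.restrict (Set.Icc_subset_Icc (hau.trans huv) le_rfl))
  have := h ((P₀.trans (single huv τ hτ)).trans P₁)
    (((hP₀.mono fun _ => Set.inter_subset_left).trans (isFine_single hτδ)).trans
      (hP₁.mono fun _ => Set.inter_subset_left))
  rw [intervalSum_trans, intervalSum_trans, intervalSum_single] at this
  linarith [P₀.intervalSum_nonneg hφ, P₁.intervalSum_nonneg hφ]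

end TaggedPartition

theorem sum_abs_sub_comp_le (g : ℕ → ℝ) {κ : ℕ → ℕ} {m : ℕ} (hκ : ∀ j < m, κ j ≤ κ (j + 1)) :
    ∑ j ∈ Finset.range m, |g (κ (j + 1)) - g (κ j)| ≤
      ∑ k ∈ Finset.range (κ m), |g (k + 1) - g k| := by
  induction m with
  | zero => exact Finset.sum_nonneg fun _ _ => abs_nonneg _
  | succ m ih =>
    have hm := hκ m m.lt_succ_self
    rw [Finset.sum_range_succ, ← Finset.sum_range_add_sum_Ico _ hm]
    refine add_le_add (ih fun j hj => hκ j (by omega)) ?_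
    rw [← Finset.sum_Ico_sub g hm]
    exact Finset.abs_sum_le_sum_abs _ _

theorem sum_abs_sub_le_of_forall_exists_eq {K : Type*} [LinearOrder K] (F : K → ℝ) {m n : ℕ}
    {y z : ℕ → K} (hy : ∀ j < m, y j ≤ y (j + 1)) (hz : MonotoneOn z (Set.Iic n))
    (hyz : ∀ j ≤ m, ∃ k ≤ n, z k = y j) :
    ∑ j ∈ Finset.range m, |F (y (j + 1)) - F (y j)| ≤
      ∑ k ∈ Finset.range n, |F (z (k + 1)) - F (z k)| := by
  classical
  have hex : ∀ j, ∃ k, y (min j m) ≤ z k := fun j =>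
    let ⟨k, _, hk⟩ := hyz _ (min_le_right j m); ⟨k, hk.ge⟩
  -- `κ j` is the first index at which `z` reaches `y j`
  set κ : ℕ → ℕ := fun j => Nat.find (hex j)
  have hκ : ∀ j ≤ m, κ j ≤ n ∧ z (κ j) = y j := by
    intro j hj
    obtain ⟨k, hkn, hk⟩ := hyz j hj
    have hmin : min j m = j := min_eq_left hj
    have hle : κ j ≤ k := Nat.find_min' _ (by rw [hmin, hk])
    refine ⟨hle.trans hkn, le_antisymm (hk ▸ hz (hle.trans hkn) hkn hle) ?_⟩
    calc y j = y (min j m) := by rw [hmin]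
      _ ≤ z (κ j) := Nat.find_spec (hex j)
  have hκmono : ∀ j < m, κ j ≤ κ (j + 1) := fun j hj => Nat.find_mono fun k hk => by
    rw [min_eq_left hj.le] at ⊢
    rw [min_eq_left hj] at hk
    exact (hy j hj).trans hk
  calc ∑ j ∈ Finset.range m, |F (y (j + 1)) - F (y j)|
      = ∑ j ∈ Finset.range m, |F (z (κ (j + 1))) - F (z (κ j))| :=
        Finset.sum_congr rfl fun j hj => by
          rw [(hκ j (Finset.mem_range.1 hj).le).2, (hκ (j + 1) (Finset.mem_range.1 hj)).2]
    _ ≤ ∑ k ∈ Finset.range (κ m), |F (z (k + 1)) - F (z k)| :=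
        sum_abs_sub_comp_le (fun k => F (z k)) hκmono
    _ ≤ ∑ k ∈ Finset.range n, |F (z (k + 1)) - F (z k)| :=
        Finset.sum_le_sum_of_subset_of_nonneg (Finset.range_subset_range.2 (hκ m le_rfl).1)
          fun _ _ _ => abs_nonneg _

section HasIntegral

variable {K : Type*} [LinearOrder K] [TopologicalSpace K] {f G : K → ℝ} {a b : K} {A B : ℝ}

theorem HasIntegral.degenerate (h : HasIntegral f G a a A) : A = f a * G a := by
  by_contra hne
  obtain ⟨δ, -, hδ⟩ := h _ (abs_pos.2 (sub_ne_zero.2 hne))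
  have := hδ _ (TaggedPartition.isFine_point δ)
  rw [TaggedPartition.riemannSum_point, abs_sub_comm A] at this
  exact lt_irrefl _ this

theorem HasIntegral.unique [OrderTopology K] [CompactSpace K] (hab : a ≤ b)
    (hA : HasIntegral f G a b A) (hB : HasIntegral f G a b B) : A = B := by
  by_contra hne
  have hε : 0 < |A - B| / 2 := half_pos (abs_pos.2 (sub_ne_zero.2 hne))
  obtain ⟨δA, hδA, hA⟩ := hA _ hε
  obtain ⟨δB, hδB, hB⟩ := hB _ hε
  obtain ⟨P, hP⟩ := TaggedPartition.exists_isFine hab (hδA.inter hδB)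
  have h1 := hA P (hP.mono fun _ => Set.inter_subset_left)
  have h2 := hB P (hP.mono fun _ => Set.inter_subset_right)
  have := abs_sub_le A (riemannSum f G P) B
  rw [abs_sub_comm A (riemannSum f G P)] at this
  linarith

end HasIntegral

theorem Finset.sum_abs_le_of_forall_subset {ι : Type*} (s : Finset ι) (g : ι → ℝ) {C : ℝ}
    (h : ∀ t ⊆ s, |∑ i ∈ t, g i| ≤ C) : ∑ i ∈ s, |g i| ≤ 2 * C := by
  classical
  have hpos : ∑ i ∈ s.filter (0 ≤ g ·), |g i| ≤ C := by
    rw [Finset.sum_congr rfl fun i hi => abs_of_nonneg (Finset.mem_filter.1 hi).2]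
    exact (le_abs_self _).trans (h _ (Finset.filter_subset _ _))
  have hneg : ∑ i ∈ s.filter (¬ 0 ≤ g ·), |g i| ≤ C := by
    rw [Finset.sum_congr rfl fun i hi => abs_of_neg (not_le.1 (Finset.mem_filter.1 hi).2),
      Finset.sum_neg_distrib]
    exact (neg_le_abs _).trans (h _ (Finset.filter_subset _ _))
  rw [← Finset.sum_filter_add_sum_filter_not s (0 ≤ g ·)]
  linarith

section Primitive

variable {K : Type*} [LinearOrder K] [TopologicalSpace K] [OrderTopology K] [CompactSpace K]
  [BoundedOrder K] {f G F : K → ℝ}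

open TaggedPartition

theorem exists_isGauge_abs_intervalSum_sub_lt (hF : ∀ x : K, HasIntegral f G ⊥ x (F x))
    {u v : K} (huv : u ≤ v) {ε : ℝ} (hε : 0 < ε) :
    ∃ δ, IsGauge K u v δ ∧ ∀ P : TaggedPartition K u v, P.IsFine δ →
      |P.intervalSum (stieltjesTerm f G) - (F v - F u)| < ε := by
  obtain ⟨δu, hδu, hu⟩ := hF u (ε / 2) (half_pos hε)
  obtain ⟨δv, hδv, hv⟩ := hF v (ε / 2) (half_pos hε)
  obtain ⟨P₀, hP₀⟩ :=
    exists_isFine bot_le (hδu.inter (hδv.restrict (Set.Icc_subset_Icc_right huv)))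
  refine ⟨fun x => δv x ∩ Set.Icc u v, hδv.restrict (Set.Icc_subset_Icc bot_le le_rfl),
    fun P hP => ?_⟩
  have h₁ := hv (P₀.trans P) ((hP₀.mono fun _ => Set.inter_subset_right.trans
    Set.inter_subset_left).trans (hP.mono fun _ => Set.inter_subset_left))
  have h₂ := hu P₀ (hP₀.mono fun _ => Set.inter_subset_left)
  rw [riemannSum_trans] at h₁
  rw [abs_lt] at h₁ h₂ ⊢
  constructor <;> linarith

theorem exists_isFine_abs_intervalSum_sub_le (hF : ∀ x : K, HasIntegral f G ⊥ x (F x))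
    {δ : K → Set K} (hδ : IsGauge K ⊥ ⊤ δ) {u v : K} (huv : u ≤ v) {ε : ℝ} (hε : 0 < ε) :
    ∃ Q : TaggedPartition K u v, Q.IsFine δ ∧
      |Q.intervalSum (stieltjesTerm f G) - (F v - F u)| ≤ ε := by
  obtain ⟨δ', hδ', hQ'⟩ := exists_isGauge_abs_intervalSum_sub_lt hF huv hε
  obtain ⟨Q, hQ⟩ :=
    exists_isFine huv ((hδ.restrict (Set.Icc_subset_Icc bot_le le_top)).inter hδ')
  exact ⟨Q, hQ.mono fun _ => Set.inter_subset_left.trans Set.inter_subset_left,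
    (hQ' Q (hQ.mono fun _ => Set.inter_subset_right)).le⟩

theorem abs_sum_stieltjesDefect_le (hF : ∀ x : K, HasIntegral f G ⊥ x (F x)) {δ : K → Set K}
    (hδ : IsGauge K ⊥ ⊤ δ) {η : ℝ}
    (hRS : ∀ P : TaggedPartition K ⊥ ⊤, P.IsFine δ → |riemannSum f G P - F ⊤| < η)
    {P : TaggedPartition K ⊥ ⊤} (hP : P.IsFine δ) {S : Finset ℕ} (hS : S ⊆ Finset.range P.n) :
    |∑ i ∈ S, stieltjesDefect f G F (P.t (i + 1)) (P.x i) (P.x (i + 1))| ≤ 2 * η := by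
  classical
  set n := P.n
  set E := fun i => stieltjesDefect f G F (P.t (i + 1)) (P.x i) (P.x (i + 1))
  set ΔF := fun i => F (P.x (i + 1)) - F (P.x i)
  have hη : 0 < η := (abs_nonneg _).trans_lt (hRS P hP)
  -- Keep the intervals indexed by `S` and replace the others by partitions on which the sum
  -- is within `η / (n + 1)` of the increment of `F`.
  have hpieces : ∀ i < n, ∃ Q : TaggedPartition K (P.x i) (P.x (i + 1)), Q.IsFine δ ∧
      |Q.intervalSum (stieltjesTerm f G) - ΔF i - (if i ∈ S then E i else 0)| ≤ η / (n + 1) := by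
    intro i hi
    by_cases hiS : i ∈ S
    · refine ⟨single (P.mono i hi) _ (P.tag_mem i hi), isFine_single (hP i hi), ?_⟩
      simp only [intervalSum_single, hiS, if_true, E, ΔF, stieltjesDefect, sub_self, abs_zero]
      positivity
    · simpa only [hiS, if_false, sub_zero] using
        exists_isFine_abs_intervalSum_sub_le hF hδ (P.mono i hi) (ε := η / (n + 1)) (by positivity)
  obtain ⟨R, hR, c, hc, hRc⟩ := exists_isFine_of_pieces P.x_zero P.x_last
    (p := fun i c => |c - ΔF i - (if i ∈ S then E i else 0)| ≤ η / (n + 1)) hpieces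
  have hRS' := hRS R hR
  rw [riemannSum_eq, hRc, ← (hF ⊥).degenerate] at hRS'
  have htel : ∑ i ∈ Finset.range n, ΔF i = F ⊤ - F ⊥ := P.intervalSum_sub_eq F
  have hES : ∑ i ∈ S, E i = ∑ i ∈ Finset.range n, (if i ∈ S then E i else 0) := by
    rw [Finset.sum_ite_mem, Finset.inter_eq_right.2 hS]
  have hsplit : ∑ i ∈ S, E i = (F ⊥ + ∑ i ∈ Finset.range n, c i - F ⊤) -
      ∑ i ∈ Finset.range n, (c i - ΔF i - if i ∈ S then E i else 0) := by
    rw [Finset.sum_sub_distrib, Finset.sum_sub_distrib, htel, ← hES]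
    ring
  have herr : |∑ i ∈ Finset.range n, (c i - ΔF i - if i ∈ S then E i else 0)| ≤ η :=
    calc _ ≤ ∑ i ∈ Finset.range n, η / (n + 1) := (Finset.abs_sum_le_sum_abs _ _).trans
          (Finset.sum_le_sum fun i hi => hc i (Finset.mem_range.1 hi))
      _ = n / (n + 1) * η := by rw [Finset.sum_const, Finset.card_range, nsmul_eq_mul]; ring
      _ ≤ η := mul_le_of_le_one_left hη.le ((div_le_one (by positivity)).2 (by linarith))
  rw [hsplit]
  linarith [abs_sub (F ⊥ + ∑ i ∈ Finset.range n, c i - F ⊤)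
    (∑ i ∈ Finset.range n, (c i - ΔF i - if i ∈ S then E i else 0))]

/-- The Saks–Henstock lemma. -/
theorem exists_isGauge_intervalSum_abs_stieltjesDefect_le
    (hF : ∀ x : K, HasIntegral f G ⊥ x (F x)) {ε : ℝ} (hε : 0 < ε) :
    ∃ δ, IsGauge K ⊥ ⊤ δ ∧ ∀ P : TaggedPartition K ⊥ ⊤, P.IsFine δ →
      P.intervalSum (fun t u v => |stieltjesDefect f G F t u v|) ≤ ε := by
  obtain ⟨δ, hδ, hRS⟩ := hF ⊤ (ε / 4) (by positivity)
  refine ⟨δ, hδ, fun P hP => ?_⟩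
  have := Finset.sum_abs_le_of_forall_subset _ _ fun S hS =>
    abs_sum_stieltjesDefect_le hF hδ hRS hP hS
  unfold intervalSum
  linarith

theorem tendsto_primitive_sub (hF : ∀ x : K, HasIntegral f G ⊥ x (F x)) (x : K) :
    Tendsto (fun y => F y - F x - f x * (G y - G x)) (nhds x) (nhds 0) := by
  rw [Metric.tendsto_nhds]
  intro ε hε
  obtain ⟨δ, hδ, hSH⟩ := exists_isGauge_intervalSum_abs_stieltjesDefect_le hF (half_pos hε)
  obtain ⟨hxδ, hconn, -⟩ := hδ x ⟨bot_le, le_top⟩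
  have hloc := fun {u v : K} => le_of_forall_isFine_intervalSum_le hδ
    (fun _ _ _ => abs_nonneg _) hSH (u := u) (v := v) (τ := x) bot_le
  filter_upwards [hδ.mem_nhds x] with y hy
  rw [Real.dist_eq, sub_zero]
  refine lt_of_le_of_lt ?_ (half_lt_self hε)
  rcases le_total x y with hxy | hyx
  · rw [show F y - F x - f x * (G y - G x) = -stieltjesDefect f G F x x y by
      simp only [stieltjesDefect, stieltjesTerm]; ring, abs_neg]
    exact hloc hxy le_top ⟨le_rfl, hxy⟩ fun z hz => hconn.out hxδ hy ⟨hz.1.le, hz.2⟩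
  · rw [show F y - F x - f x * (G y - G x) = stieltjesDefect f G F x y x by
      simp only [stieltjesDefect, stieltjesTerm]; ring]
    exact hloc hyx le_top ⟨hyx, le_rfl⟩ fun z hz => hconn.out hy hxδ ⟨hz.1.le, hz.2⟩

theorem amenable_primitive (hF : ∀ x : K, HasIntegral f G ⊥ x (F x)) (hG : Amenable G) :
    Amenable F := by
  -- near `x`, `F = F x + f x * (G - G x) + o(1)`, so `F` inherits the one-sided limits of `G`
  have hlim : ∀ x (l : Filter K) (g : ℝ), l ≤ nhds x → Tendsto G l (nhds g) →
      Tendsto F l (nhds (F x + f x * (g - G x))) := by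
    intro x l g hl hGl
    have := (((tendsto_primitive_sub hF x).mono_left hl).add
      ((hGl.sub_const (G x)).const_mul (f x))).const_add (F x)
    rw [zero_add] at this
    exact this.congr fun y => by ring
  refine ⟨fun x => ?_, fun x hx h => ?_, fun x hx h => ?_⟩
  · have := hlim x _ _ nhdsWithin_le_nhds (hG.1 x)
    rwa [sub_self, mul_zero, add_zero] at this
  · obtain ⟨g, hg⟩ := hG.2.1 x hx h
    exact ⟨_, hlim x _ g nhdsWithin_le_nhds hg⟩
  · obtain ⟨g, hg⟩ := hG.2.2 x hx h
    exact ⟨_, hlim x _ g nhdsWithin_le_nhds hg⟩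

theorem bddAbove_varSums (hF : ∀ x : K, HasIntegral f G ⊥ x (F x)) (hG : Monotone G) {B : ℝ}
    (hB : HasIntegral (fun x => |f x|) G ⊥ ⊤ B) : BddAbove (varSums F ⊥ ⊤) := by
  obtain ⟨δ₁, hδ₁, hB⟩ := hB 1 one_pos
  obtain ⟨δ₂, hδ₂, hSH⟩ := exists_isGauge_intervalSum_abs_stieltjesDefect_le hF one_pos
  refine ⟨B + 2 - |f ⊥| * G ⊥, ?_⟩
  rintro _ ⟨m, y, hy0, hym, hy, rfl⟩
  -- a fine partition through the points `y j` has at least their variation sum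
  obtain ⟨R, hR, c, hc, hRc⟩ := exists_isFine_of_pieces hy0 hym
    (φ := fun _ u v => |F v - F u|) (p := fun i c => |F (y (i + 1)) - F (y i)| ≤ c)
    fun i hi =>
      let ⟨Q, hQ⟩ := exists_isFine (hy i hi)
        ((hδ₁.inter hδ₂).restrict (Set.Icc_subset_Icc bot_le le_top))
      ⟨Q, hQ.mono fun _ => Set.inter_subset_left, Q.abs_sub_le_intervalSum F⟩
  have h₁ := hB R (hR.mono fun _ => Set.inter_subset_left)
  have h₂ := hSH R (hR.mono fun _ => Set.inter_subset_right)
  have h₃ := abs_le.1 (R.abs_intervalSum_abs_sub_le hG f F)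
  have h₄ := Finset.sum_le_sum fun i hi => hc i (Finset.mem_range.1 hi)
  rw [riemannSum_eq, abs_lt] at h₁
  linarith [h₁.2, h₃.1]

theorem hasIntegral_abs (hF : ∀ x : K, HasIntegral f G ⊥ x (F x)) (hG : Monotone G)
    (hBdd : BddAbove (varSums F ⊥ ⊤)) :
    HasIntegral (fun x => |f x|) G ⊥ ⊤ (|f ⊥| * G ⊥ + sSup (varSums F ⊥ ⊤)) := by
  intro ε hε
  set V := sSup (varSums F ⊥ ⊤)
  have hne : (varSums F ⊥ ⊤).Nonempty :=
    ⟨_, (single bot_le ⊥ ⟨le_rfl, bot_le⟩ : TaggedPartition K ⊥ ⊤).intervalSum_mem_varSums F⟩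
  obtain ⟨_, ⟨m, y, -, -, hy, rfl⟩, hyV⟩ := exists_lt_of_lt_csSup hne (sub_lt_self V (half_pos hε))
  obtain ⟨δ₀, hδ₀, hSH⟩ := exists_isGauge_intervalSum_abs_stieltjesDefect_le hF (half_pos hε)
  -- a finer gauge makes every `y j` a tag, hence a division point of the split partition
  obtain ⟨δ, hδ, hδδ₀, htag⟩ := hδ₀.exists_eq_of_mem_finset ((Finset.range (m + 1)).image y)
  refine ⟨δ, hδ, fun P hP => ?_⟩
  have hup := le_csSup hBdd (P.intervalSum_mem_varSums F)
  have hlow : _ ≤ P.split.intervalSum (fun _ u v => |F v - F u|) :=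
    sum_abs_sub_le_of_forall_exists_eq F hy P.split.monotoneOn_x fun j hj =>
      hP.exists_split_x_eq ⟨bot_le, le_top⟩ fun i _ => htag _ (y j)
        (Finset.mem_image_of_mem y (Finset.mem_range.2 (Nat.lt_succ_of_le hj)))
  have h₁ := abs_le.1 (P.abs_intervalSum_abs_sub_le hG f F)
  have h₂ := abs_le.1 (P.split.abs_intervalSum_abs_sub_le hG f F)
  have h₃ := hSH P (hP.mono hδδ₀)
  have h₄ := hSH P.split (hP.mono hδδ₀).split
  rw [intervalSum_split_stieltjesTerm] at h₂
  rw [riemannSum_eq, abs_lt]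
  constructor
  · linarith [h₂.1]
  · linarith [h₁.2]

end Primitive

theorem abs_integrable_iff_primitive_NBV {K : Type*} [LinearOrder K] [TopologicalSpace K]
    [OrderTopology K] [CompactSpace K] [BoundedOrder K] (G f : K → ℝ)
    (hGmono : Monotone G) (hGam : Amenable G)
    (F : K → ℝ) (hF : ∀ x : K, HasIntegral f G (⊥ : K) x (F x)) :
    ((∃ B, HasIntegral (fun x => |f x|) G (⊥ : K) ⊤ B) ↔
      Amenable F ∧ BddAbove (varSums F (⊥ : K) ⊤)) ∧
    ∀ B, HasIntegral (fun x => |f x|) G (⊥ : K) ⊤ B →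
      B = |f ⊥| * G ⊥ + sSup (varSums F (⊥ : K) ⊤) :=
  ⟨⟨fun ⟨_, hB⟩ => ⟨amenable_primitive hF hGam, bddAbove_varSums hF hGmono hB⟩,
    fun ⟨_, hBdd⟩ => ⟨_, hasIntegral_abs hF hGmono hBdd⟩⟩,
    fun _ hB => hB.unique bot_le (hasIntegral_abs hF hGmono (bddAbove_varSums hF hGmono hB))⟩
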